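/- arXiv:2404.05618 — 4 statements merged into one kernel-verified Lean document; each statement's English description precedes it below -/
import Mathlib

section
/- Let ε > 0, θ ∈ [-π/2, π/2], n = 1 + ⌈log₂(1/ε)⌉, and define θ* ∈ [-π/2, π/2] by 2^{n-1} tan(θ*/2) = ⌊2^{n-1} tan(θ/2) + 1/2⌋. Then |θ - θ*| ≤ ε. -/
open Real

lemma arctan_lip : LipschitzWith 1 Real.arctan := by
  apply lipschitzWith_of_nnnorm_deriv_le Real.differentiable_arctan
  intro x
  rw [Real.deriv_arctan, ← NNReal.coe_le_coe, coe_nnnorm]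
  simp only [NNReal.coe_one, Real.norm_eq_abs]
  rw [abs_of_nonneg (by positivity)]
  rw [div_le_one (by positivity)]
  nlinarith [sq_nonneg x]

lemma arctan_dist (x y : ℝ) : |Real.arctan x - Real.arctan y| ≤ |x - y| := by
  have := arctan_lip.dist_le_mul x y
  simpa [Real.dist_eq] using this

theorem stmt_6 (ε θ θs : ℝ) (hε : 0 < ε)
    (hθ : θ ∈ Set.Icc (-(π / 2)) (π / 2)) (hθs : θs ∈ Set.Icc (-(π / 2)) (π / 2))
    (n : ℤ) (hn : n = 1 + ⌈Real.logb 2 (1 / ε)⌉)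
    (hdef : (2 : ℝ) ^ (n - 1) * Real.tan (θs / 2)
      = ⌊(2 : ℝ) ^ (n - 1) * Real.tan (θ / 2) + 1 / 2⌋) :
    |θ - θs| ≤ ε := by
  have hpi : (0:ℝ) < π := Real.pi_pos
  have hp : (0:ℝ) < (2:ℝ) ^ (n - 1) := by positivity
  have h1 := Int.floor_le ((2:ℝ) ^ (n - 1) * Real.tan (θ / 2) + 1 / 2)
  have h2 := Int.lt_floor_add_one ((2:ℝ) ^ (n - 1) * Real.tan (θ / 2) + 1 / 2)
  have hdef' : (2:ℝ) ^ (n - 1) * (Real.tan (θ / 2) - Real.tan (θs / 2))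
      = ((2:ℝ) ^ (n - 1) * Real.tan (θ / 2) + 1 / 2) - 1 / 2
        - (⌊(2:ℝ) ^ (n - 1) * Real.tan (θ / 2) + 1 / 2⌋ : ℝ) := by
    rw [mul_sub, hdef]; ring
  have habs2 : |(2:ℝ) ^ (n - 1) * (Real.tan (θ / 2) - Real.tan (θs / 2))| ≤ 1/2 := by
    rw [hdef', abs_le]; constructor <;> linarith
  have htan : |Real.tan (θ / 2) - Real.tan (θs / 2)| ≤ (1/2) / (2:ℝ) ^ (n - 1) := by
    rw [le_div_iff₀ hp]
    calc |Real.tan (θ / 2) - Real.tan (θs / 2)| * (2:ℝ) ^ (n - 1)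
        = |(2:ℝ) ^ (n - 1) * (Real.tan (θ / 2) - Real.tan (θs / 2))| := by
          rw [abs_mul, abs_of_pos hp, mul_comm]
      _ ≤ 1/2 := habs2
  have hθm : θ / 2 ∈ Set.Ioo (-(π/2)) (π/2) := by
    constructor <;> [nlinarith [hθ.1]; nlinarith [hθ.2]]
  have hθsm : θs / 2 ∈ Set.Ioo (-(π/2)) (π/2) := by
    constructor <;> [nlinarith [hθs.1]; nlinarith [hθs.2]]
  have ha1 : Real.arctan (Real.tan (θ / 2)) = θ / 2 := Real.arctan_tan hθm.1 hθm.2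
  have ha2 : Real.arctan (Real.tan (θs / 2)) = θs / 2 := Real.arctan_tan hθsm.1 hθsm.2
  have hhalf : |θ / 2 - θs / 2| ≤ (1/2) / (2:ℝ) ^ (n - 1) := by
    calc |θ / 2 - θs / 2| = |Real.arctan (Real.tan (θ / 2)) - Real.arctan (Real.tan (θs / 2))| := by
          rw [ha1, ha2]
      _ ≤ |Real.tan (θ / 2) - Real.tan (θs / 2)| := arctan_dist _ _
      _ ≤ (1/2) / (2:ℝ) ^ (n - 1) := htan
  have habs : |θ - θs| ≤ (2:ℝ) ^ (1 - n) := by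
    have hsplit : |θ - θs| = 2 * |θ / 2 - θs / 2| := by
      rw [show θ - θs = 2 * (θ/2 - θs/2) by ring, abs_mul, abs_two]
    have h2n : (2:ℝ) ^ (1 - n) = 2 * ((1/2) / (2:ℝ) ^ (n - 1)) := by
      rw [show (1:ℤ) - n = -(n-1) by ring, zpow_neg]
      field_simp
    rw [hsplit, h2n]; linarith
  refine habs.trans ?_
  have hc : (1 : ℝ) - n = -(⌈Real.logb 2 (1/ε)⌉ : ℝ) := by
    rw [hn]; push_cast; ring
  have hrp : (2:ℝ) ^ (1 - n) = (2:ℝ) ^ ((1:ℝ) - n) := by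
    rw [← Real.rpow_intCast]; push_cast; norm_num
  rw [hrp, hc]
  have hle : Real.logb 2 (1/ε) ≤ (⌈Real.logb 2 (1/ε)⌉ : ℝ) := Int.le_ceil _
  calc (2:ℝ) ^ (-(⌈Real.logb 2 (1/ε)⌉ : ℝ)) ≤ (2:ℝ) ^ (-Real.logb 2 (1/ε)) := by
        apply Real.rpow_le_rpow_of_exponent_le (by norm_num); linarith
    _ = ε := by
        rw [Real.rpow_neg (by norm_num),
          Real.rpow_logb two_pos (by norm_num) (by positivity), one_div, inv_inv]
end

section
/- Let θ, θ* ∈ [-π/2, π/2] with tan(θ/2)tan(θ*/2) ≥ 0 and |tan(θ/2) - tan(θ*/2)| ≤ 2^{-n} where n = 1 + ⌈log₂(1/ε)⌉ for some ε > 0. Then the operator distance ||R_θ - R_{θ*}|| = 2|sin((θ-θ*)/2)| satisfies ||R_θ - R_{θ*}|| ≤ |θ - θ*| ≤ ε. -/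
/-!
Since `R_φ` is diagonal with unimodular entries, `‖R_θ - R_θ*‖ = |e^{iθ} - e^{iθ*}|
= |e^{i(θ - θ*)} - 1| = 2|sin((θ - θ*)/2)| ≤ |θ - θ*|`. For the angle bound, `arctan` is
1-Lipschitz (its derivative is `1/(1 + x²)`), so on `(-π/2, π/2)` the half-angles are no farther
apart than their tangents: `|θ - θ*| ≤ 2 |tan(θ/2) - tan(θ*/2)| ≤ 2^{1-n} ≤ ε`.
-/

open Complex Real Matrix

noncomputable def Rz (φ : ℝ) : Matrix (Fin 2) (Fin 2) ℂ :=
  Matrix.diagonal ![1, Complex.exp (Complex.I * φ)]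

namespace Real

theorem lipschitzWith_arctan : LipschitzWith 1 arctan := by
  refine lipschitzWith_of_nnnorm_deriv_le differentiable_arctan fun x => ?_
  rw [← NNReal.coe_le_coe, coe_nnnorm, deriv_arctan, NNReal.coe_one, norm_div, norm_one,
    Real.norm_of_nonneg (by positivity)]
  exact div_le_one_of_le₀ (by nlinarith [sq_nonneg x]) (by positivity)

theorem abs_sub_le_abs_tan_sub_tan {a b : ℝ} (ha : a ∈ Set.Ioo (-(π / 2)) (π / 2))
    (hb : b ∈ Set.Ioo (-(π / 2)) (π / 2)) : |a - b| ≤ |tan a - tan b| := by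
  have h := lipschitzWith_arctan.dist_le_mul (tan a) (tan b)
  rwa [arctan_tan ha.1 ha.2, arctan_tan hb.1 hb.2, NNReal.coe_one, one_mul, dist_eq,
    dist_eq] at h

theorem le_zpow_ceil_logb {b y : ℝ} (hb : 1 < b) (hy : 0 < y) : y ≤ b ^ ⌈logb b y⌉ :=
  calc y = b ^ logb b y := (rpow_logb (by linarith) hb.ne' hy).symm
    _ ≤ b ^ (⌈logb b y⌉ : ℝ) := rpow_le_rpow_of_exponent_le hb.le (Int.le_ceil _)
    _ = b ^ ⌈logb b y⌉ := rpow_intCast b _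

theorem two_mul_two_zpow_neg_one_add_ceil_logb_le {ε : ℝ} (hε : 0 < ε) :
    2 * (2 : ℝ) ^ (-(1 + ⌈logb 2 (1 / ε)⌉)) ≤ ε := by
  have hpow : 1 / ε ≤ (2 : ℝ) ^ ⌈logb 2 (1 / ε)⌉ := le_zpow_ceil_logb one_lt_two (by positivity)
  calc 2 * (2 : ℝ) ^ (-(1 + ⌈logb 2 (1 / ε)⌉)) = ((2 : ℝ) ^ ⌈logb 2 (1 / ε)⌉)⁻¹ := by
        rw [neg_add, zpow_add₀ two_ne_zero, _root_.zpow_neg, zpow_one, _root_.zpow_neg,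
          ← mul_assoc, mul_inv_cancel₀ two_ne_zero, one_mul]
    _ ≤ (1 / ε)⁻¹ := inv_anti₀ (by positivity) hpow
    _ = ε := by rw [one_div, inv_inv]

end Real

theorem Rz_sub_Rz (θ θs : ℝ) :
    Rz θ - Rz θs = diagonal ![0, exp (I * θ) - exp (I * θs)] := by
  rw [Rz, Rz, diagonal_sub]
  congr 1
  ext i
  fin_cases i <;> simp

theorem norm_exp_I_mul_sub_exp_I_mul (θ θs : ℝ) :
    ‖exp (I * θ) - exp (I * θs)‖ = ‖exp (I * (θ - θs : ℝ)) - 1‖ := by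
  have h : exp (I * θ) - exp (I * θs) = (exp (I * (θ - θs : ℝ)) - 1) * exp (I * θs) := by
    rw [sub_mul, one_mul, ← Complex.exp_add]
    push_cast
    ring_nf
  rw [h, norm_mul, norm_exp_I_mul_ofReal, mul_one]

open scoped Matrix.Norms.L2Operator in
theorem opNorm_Rz_sub_Rz (θ θs : ℝ) :
    ‖toEuclideanCLM (𝕜 := ℂ) (n := Fin 2) (Rz θ - Rz θs)‖
      = ‖exp (I * (θ - θs : ℝ)) - 1‖ := by
  rw [l2_opNorm_toEuclideanCLM, Rz_sub_Rz, l2_opNorm_diagonal]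
  simp [Pi.norm_def, Fin.univ_succ, norm_exp_I_mul_sub_exp_I_mul]

theorem stmt_7_general (ε θ θs : ℝ) (hε : 0 < ε)
    (hθ : θ ∈ Set.Icc (-(π / 2)) (π / 2)) (hθs : θs ∈ Set.Icc (-(π / 2)) (π / 2))
    (n : ℤ) (hn : n = 1 + ⌈Real.logb 2 (1 / ε)⌉)
    (hclose : |Real.tan (θ / 2) - Real.tan (θs / 2)| ≤ (2 : ℝ) ^ (-n)) :
    ‖Matrix.toEuclideanCLM (𝕜 := ℂ) (n := Fin 2) (Rz θ - Rz θs)‖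
      = 2 * |Real.sin ((θ - θs) / 2)| ∧
    ‖Matrix.toEuclideanCLM (𝕜 := ℂ) (n := Fin 2) (Rz θ - Rz θs)‖ ≤ |θ - θs| ∧
    |θ - θs| ≤ ε := by
  have half_mem {φ : ℝ} (hφ : φ ∈ Set.Icc (-(π / 2)) (π / 2)) :
      φ / 2 ∈ Set.Ioo (-(π / 2)) (π / 2) :=
    ⟨by linarith [hφ.1, pi_pos], by linarith [hφ.2, pi_pos]⟩
  have half_angles := Real.abs_sub_le_abs_tan_sub_tan (half_mem hθ) (half_mem hθs)
  have angle_eq : |θ - θs| = 2 * |θ / 2 - θs / 2| := by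
    rw [← sub_div, abs_div, abs_two]
    ring
  refine ⟨?_, ?_, ?_⟩
  · rw [opNorm_Rz_sub_Rz, norm_exp_I_mul_ofReal_sub_one, norm_mul, Real.norm_eq_abs,
      Real.norm_eq_abs, abs_two]
  · exact (opNorm_Rz_sub_Rz θ θs).trans_le norm_exp_I_mul_ofReal_sub_one_le
  · calc |θ - θs| ≤ 2 * (2 : ℝ) ^ (-n) := by linarith [half_angles.trans hclose]
      _ ≤ ε := hn ▸ Real.two_mul_two_zpow_neg_one_add_ceil_logb_le hε

theorem stmt_7 (ε θ θs : ℝ) (hε : 0 < ε)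
    (hθ : θ ∈ Set.Icc (-(π / 2)) (π / 2)) (hθs : θs ∈ Set.Icc (-(π / 2)) (π / 2))
    (hsign : 0 ≤ Real.tan (θ / 2) * Real.tan (θs / 2))
    (n : ℤ) (hn : n = 1 + ⌈Real.logb 2 (1 / ε)⌉)
    (hclose : |Real.tan (θ / 2) - Real.tan (θs / 2)| ≤ (2 : ℝ) ^ (-n)) :
    ‖Matrix.toEuclideanCLM (𝕜 := ℂ) (n := Fin 2) (Rz θ - Rz θs)‖
      = 2 * |Real.sin ((θ - θs) / 2)| ∧
    ‖Matrix.toEuclideanCLM (𝕜 := ℂ) (n := Fin 2) (Rz θ - Rz θs)‖ ≤ |θ - θs| ∧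
    |θ - θs| ≤ ε :=
  stmt_7_general ε θ θs hε hθ hθs n hn hclose
end

section
/- For any θ ∈ [-π/2, π/2] and any real x with |x| ≤ 1, |2 arctan x - θ| ≤ 2|x - tan(θ/2)| whenever x·tan(θ/2) ≥ 0. -/
open Real

lemma arctan_lipschitz' (a b : ℝ) : |Real.arctan a - Real.arctan b| ≤ |a - b| := by
  have := Convex.norm_image_sub_le_of_norm_deriv_le (f := Real.arctan) (C := 1)
    (s := Set.univ) (fun x _ => (Real.hasDerivAt_arctan x).differentiableAt)
    (fun x _ => by
      rw [Real.deriv_arctan, Real.norm_eq_abs, abs_of_nonneg (by positivity : (0:ℝ) ≤ 1 / (1 + x ^ 2))]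
      rw [div_le_one (by positivity)]
      nlinarith [sq_nonneg x])
    convex_univ (Set.mem_univ b) (Set.mem_univ a)
  simpa using this

theorem stmt_8 (θ x : ℝ) (hθ : θ ∈ Set.Icc (-(π / 2)) (π / 2))
    (hx : |x| ≤ 1) (hsign : 0 ≤ x * Real.tan (θ / 2)) :
    |2 * Real.arctan x - θ| ≤ 2 * |x - Real.tan (θ / 2)| := by
  obtain ⟨h1, h2⟩ := hθ
  have hpi := Real.pi_pos
  have ht : Real.arctan (Real.tan (θ / 2)) = θ / 2 :=
    Real.arctan_tan (by linarith) (by linarith)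
  have key := arctan_lipschitz' x (Real.tan (θ / 2))
  rw [ht] at key
  have heq : 2 * Real.arctan x - θ = 2 * (Real.arctan x - θ / 2) := by ring
  rw [heq, abs_mul, abs_two]
  linarith
end

section
/- Let n ≥ 1, 0 ≤ k ≤ 2^n. Consider the unit vector ψ = 2^{-n/2}(Σ_{j=0}^{k-1} e_j + i Σ_{j=k}^{2^n-1} e_j) in ℂ^{2^n}, where e_j is the standard basis. The squared modulus of its inner product with the uniform vector u = 2^{-n/2} Σ_j e_j equals (k² + (2^n - k)²)/4^n, which equals (1 + tan²(θ*/2))/2 when k = 2^{n-1}(1 + tan(θ*/2)) for θ* ∈ [-π/2, π/2]. -/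
/-! Pairing with the uniform vector sums the amplitudes of `ψ`, so `⟪u, ψ⟫ = (k + (2ⁿ - k) i) / 2ⁿ`.
Writing `k = 2ⁿ⁻¹ (1 + t)`, the squared modulus is `((1 + t)² + (1 - t)²) / 4 = (1 + t²) / 2`. -/

open Real

theorem Fin.sum_univ_ite_val_lt {M : Type*} [AddCommMonoid M] {N k : ℕ} (hk : k ≤ N) (a b : M) :
    ∑ j : Fin N, (if (j : ℕ) < k then a else b) = k • a + (N - k) • b := by
  rw [Fin.sum_univ_eq_sum_range (fun j => if j < k then a else b),
    ← Finset.sum_range_add_sum_Ico _ hk,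
    Finset.sum_congr rfl fun j hj => if_pos (Finset.mem_range.mp hj),
    Finset.sum_congr rfl fun j hj => if_neg (Nat.not_lt.mpr (Finset.mem_Ico.mp hj).1)]
  simp only [Finset.sum_const, Finset.card_range, Nat.card_Ico]

theorem EuclideanSpace.inner_toLp_const_left {𝕜 ι : Type*} [RCLike 𝕜] [Fintype ι] (c : 𝕜)
    (v : EuclideanSpace 𝕜 ι) :
    inner 𝕜 (WithLp.toLp 2 fun _ : ι => c) v = starRingEnd 𝕜 c * ∑ i, v i := by
  simp [PiLp.inner_apply, Finset.sum_mul, mul_comm]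

theorem sq_add_sq_sub_div_sq_of_eq_mul_one_add {K : Type*} [Field K] [CharZero K] {m k t : K}
    (hm : m ≠ 0) (hk : k = m * (1 + t)) :
    (k ^ 2 + (2 * m - k) ^ 2) / (2 * m) ^ 2 = (1 + t ^ 2) / 2 := by
  subst hk
  field_simp
  ring

theorem norm_inner_uniform_sq {N k : ℕ} (hk : k ≤ N) (ψ u : EuclideanSpace ℂ (Fin N))
    (hψ : ψ = fun j : Fin N => (if (j : ℕ) < k then 1 else Complex.I) / (Real.sqrt N : ℂ))
    (hu : u = fun _ : Fin N => 1 / (Real.sqrt N : ℂ)) :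
    ‖inner ℂ u ψ‖ ^ 2 = ((k : ℝ) ^ 2 + ((N : ℝ) - k) ^ 2) / (N : ℝ) ^ 2 := by
  have hu' : u = WithLp.toLp 2 fun _ => 1 / (Real.sqrt N : ℂ) := by ext; simp [hu]
  have hsqrt : ((Real.sqrt N : ℝ) : ℂ) * (Real.sqrt N : ℂ) = N := by
    rw [← Complex.ofReal_mul, Real.mul_self_sqrt N.cast_nonneg, Complex.ofReal_natCast]
  have hinner : inner ℂ u ψ = (((k : ℝ) : ℂ) + (((N : ℝ) - k : ℝ) : ℂ) * Complex.I) / (N : ℝ) := by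
    rw [hu', EuclideanSpace.inner_toLp_const_left, hψ]
    simp only [← Finset.sum_div, Fin.sum_univ_ite_val_lt hk]
    rw [map_div₀, map_one, Complex.conj_ofReal, div_mul_div_comm, one_mul, hsqrt,
      nsmul_eq_mul, nsmul_eq_mul, mul_one, Nat.cast_sub hk]
    push_cast
    rfl
  rw [hinner, Complex.sq_norm, Complex.normSq_div, Complex.normSq_add_mul_I, Complex.normSq_ofReal]
  ring

theorem stmt_16 (n k : ℕ) (hn : 1 ≤ n) (hk : k ≤ 2 ^ n)
    (ψ u : EuclideanSpace ℂ (Fin (2 ^ n)))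
    (hψ : ψ = fun j : Fin (2 ^ n) => (if (j : ℕ) < k then 1 else Complex.I) / (Real.sqrt (2 ^ n) : ℂ))
    (hu : u = fun _ : Fin (2 ^ n) => 1 / (Real.sqrt (2 ^ n) : ℂ)) :
    ‖inner (𝕜 := ℂ) u ψ‖ ^ 2
      = ((k : ℝ) ^ 2 + ((2 ^ n : ℝ) - k) ^ 2) / 4 ^ n ∧
    ∀ θs : ℝ, θs ∈ Set.Icc (-(π / 2)) (π / 2) →
      (k : ℝ) = 2 ^ (n - 1) * (1 + Real.tan (θs / 2)) →
      ‖inner (𝕜 := ℂ) u ψ‖ ^ 2 = (1 + Real.tan (θs / 2) ^ 2) / 2 := by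
  have hnorm : ‖inner ℂ u ψ‖ ^ 2 = ((k : ℝ) ^ 2 + ((2 ^ n : ℝ) - k) ^ 2) / (2 ^ n) ^ 2 := by
    exact_mod_cast norm_inner_uniform_sq hk ψ u (by exact_mod_cast hψ) (by exact_mod_cast hu)
  have hfour : (4 : ℝ) ^ n = (2 ^ n) ^ 2 := by rw [← pow_mul, mul_comm, pow_mul]; norm_num
  have htwo : (2 : ℝ) ^ n = 2 * 2 ^ (n - 1) := by rw [← pow_succ', Nat.sub_add_cancel hn]
  refine ⟨hnorm.trans (by rw [hfour]), fun θs _ hkθ => ?_⟩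
  rw [hnorm, htwo]
  exact sq_add_sq_sub_div_sq_of_eq_mul_one_add (by positivity) hkθ
end
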